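/- Let κ be an inaccessible cardinal and B a complete Boolean algebra such that for all sets I, J of cardinality less than κ and every family ψ : I × J → B one has inf_{i∈I} sup_{j∈J} ψ(i,j) ≤ sup over functions f : I → J of inf_{i∈I} ψ(i, f(i)). Then B satisfies the transfinite distributivity law at every cardinal γ < κ. -/

import Mathlib

/-!
Refine the tree `a` so that the nodes of each height are pairwise disjoint, by disjointifying the
children of every node along the well-order of their last values (this is where complements are
used). The refined tree still covers `a ∅` at every height: at successors because the children of a
node cover it, at limits `λ` by the classical distributivity law applied to
`⨅ α < λ, ⨆ f : α → γ`. A choice function produced by that law picks branches of the various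
heights `α < λ`; if two of them disagree, their nodes meet in `⊥` by disjointness, and otherwise
they are restrictions of a single branch of height `λ`. The index sets `λ` and `λ → γ` have size
less than `κ` because `κ` is a strong limit.
-/

/-- Restriction of `f : Iio β → Iio o` to `Iio α` for `α ≤ β`. -/
def resFn {o β α : Ordinal} (h : α ≤ β) (f : Set.Iio β → Set.Iio o) :
    Set.Iio α → Set.Iio o :=
  fun x => f ⟨x.1, lt_of_lt_of_le x.2 h⟩

/-- The unique function `Iio 0 → Iio o`. -/
def emptyFn (o : Ordinal) : Set.Iio (0 : Ordinal) → Set.Iio o :=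
  fun t => absurd t.2 (by simp)

lemma resFn_zero {o β : Ordinal} (h : (0 : Ordinal) ≤ β) (f : Set.Iio β → Set.Iio o) :
    resFn h f = emptyFn o :=
  funext fun t => absurd t.2 (by simp)

/-- The transfinite distributivity law at (the initial ordinal of) `o`, for a complete lattice. -/
def TransfiniteDistrib (L : Type*) [CompleteLattice L] (o : Ordinal) : Prop :=
  ∀ (h0 : (0 : Ordinal) < o)
    (a : (β : Set.Iio o) → (Set.Iio β.1 → Set.Iio o) → L),
    (∀ (β : Ordinal) (hβ : β + 1 < o) (f : Set.Iio β → Set.Iio o),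
        a ⟨β, Set.mem_Iio.mpr (lt_of_le_of_lt (le_self_add : β ≤ β + 1) hβ)⟩ f ≤
          ⨆ g : {g : Set.Iio (β + 1) → Set.Iio o // resFn (le_self_add : β ≤ β + 1) g = f},
            a ⟨β + 1, Set.mem_Iio.mpr hβ⟩ g.1) →
    (∀ (β : Set.Iio o), Order.IsSuccLimit β.1 → ∀ f : Set.Iio β.1 → Set.Iio o,
        a β f = ⨅ α : Set.Iio β.1,
          a ⟨α.1, Set.mem_Iio.mpr (lt_trans α.2 β.2)⟩ (resFn (le_of_lt α.2) f)) →
    a ⟨0, Set.mem_Iio.mpr h0⟩ (emptyFn o) ≤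
      ⨆ f : Set.Iio o → Set.Iio o, ⨅ β : Set.Iio o, a β (resFn (le_of_lt β.2) f)

universe u

open Set Cardinal

def IInfISupDistrib (B : Type*) [CompleteLattice B] (I J : Type*) : Prop :=
  ∀ c : I → J → B, ⨅ i, ⨆ j, c i j ≤ ⨆ f : I → J, ⨅ i, c i (f i)

theorem IInfISupDistrib.congr {B I J I' J' : Type*} [CompleteLattice B]
    (h : IInfISupDistrib B I J) (e : I ≃ I') (e' : J ≃ J') : IInfISupDistrib B I' J' := by
  intro c
  calc ⨅ i', ⨆ j', c i' j' = ⨅ i, ⨆ j, c (e i) (e' j) := by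
        rw [← e.iInf_comp]; simp only [e'.iSup_comp]
    _ ≤ ⨆ f : I → J, ⨅ i, c (e i) (e' (f i)) := h _
    _ ≤ ⨆ f' : I' → J', ⨅ i', c i' (f' i') := iSup_le fun f =>
        le_iSup_of_le (e' ∘ f ∘ e.symm) <| by
          rw [← e.iInf_comp]; simp only [Function.comp, Equiv.symm_apply_apply, le_rfl]

theorem Cardinal.IsStrongLimit.power_lt {a b c : Cardinal} (hc : IsStrongLimit c)
    (ha : a < c) (hb : b < c) : a ^ b < c :=
  calc a ^ b ≤ (2 ^ a) ^ b := power_le_power_right (cantor a).le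
    _ = 2 ^ (a * b) := power_mul.symm
    _ < c := hc.isStrongPrelimit (mul_lt_of_lt hc.aleph0_le ha hb)

theorem iSup_le_iSup_sdiff_iSup_lt {B ι : Type*} [Order.Coframe B] [Preorder ι]
    [WellFoundedLT ι] (x : ι → B) : ⨆ i, x i ≤ ⨆ i, x i \ ⨆ j < i, x j := by
  refine iSup_le fun i => ?_
  induction i using WellFoundedLT.induction with
  | _ i ih =>
    calc x i ≤ x i \ (⨆ j < i, x j) ⊔ ⨆ j < i, x j := le_sdiff_sup
      _ ≤ _ := sup_le (le_iSup_of_le i le_rfl) (iSup₂_le fun j hj => ih j hj)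

namespace Ordinal

variable {o : Ordinal}

theorem eq_emptyFn (f : Iio (0 : Ordinal) → Iio o) : f = emptyFn o := resFn_zero le_rfl f

theorem resFn_surjective [Nonempty (Iio o)] {α β : Ordinal} (h : α ≤ β) :
    Function.Surjective (resFn h : (Iio β → Iio o) → Iio α → Iio o) := by
  classical
  exact fun f => ⟨fun x => if hx : x.1 < α then f ⟨x.1, hx⟩ else Classical.arbitrary _,
    funext fun x => dif_pos x.2⟩

section extension

noncomputable def extFn {β : Ordinal} (f : Iio β → Iio o) (j : Iio o) : Iio (β + 1) → Iio o :=
  fun x => if h : x.1 < β then f ⟨x.1, h⟩ else j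

variable {β : Ordinal}

@[simp]
theorem resFn_extFn (f : Iio β → Iio o) (j : Iio o) : resFn le_self_add (extFn f j) = f :=
  funext fun x => dif_pos x.2

@[simp]
theorem extFn_last (f : Iio β → Iio o) (j : Iio o) : extFn f j ⟨β, Order.lt_succ β⟩ = j :=
  dif_neg (lt_irrefl β)

theorem extFn_resFn (g : Iio (β + 1) → Iio o) :
    extFn (resFn le_self_add g) (g ⟨β, Order.lt_succ β⟩) = g := by
  funext x
  by_cases h : x.1 < β
  · exact dif_pos h
  · obtain rfl : x = ⟨β, Order.lt_succ β⟩ :=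
      Subtype.ext (le_antisymm (Order.lt_succ_iff.mp x.2) (not_lt.mp h))
    exact dif_neg h

end extension

variable {B : Type*} [CompleteBooleanAlgebra B] (A : ∀ β : Ordinal, (Iio β → Iio o) → B)

/-- At a successor height the children of a node are disjointified along the order of their last
values, as in `disjointed`. -/
noncomputable def treeDisjointed (β : Ordinal) : (Iio β → Iio o) → B :=
  limitRecOn β (fun _ => A 0 (emptyFn o))
    (fun δ D g => D (resFn le_self_add g) ⊓
      (A (δ + 1) g \ ⨆ j < g ⟨δ, Order.lt_succ δ⟩, A (δ + 1) (extFn (resFn le_self_add g) j)))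
    (fun _ _ D f => ⨅ α : Iio _, D α.1 α.2 (resFn α.2.le f))

theorem treeDisjointed_zero (f : Iio 0 → Iio o) : treeDisjointed A 0 f = A 0 (emptyFn o) := by
  rw [treeDisjointed, limitRecOn_zero]

theorem treeDisjointed_add_one (δ : Ordinal) (g : Iio (δ + 1) → Iio o) :
    treeDisjointed A (δ + 1) g = treeDisjointed A δ (resFn le_self_add g) ⊓
      (A (δ + 1) g \ ⨆ j < g ⟨δ, Order.lt_succ δ⟩, A (δ + 1) (extFn (resFn le_self_add g) j)) := by
  rw [treeDisjointed, limitRecOn_add_one]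
  rfl

theorem treeDisjointed_extFn (δ : Ordinal) (f : Iio δ → Iio o) (j : Iio o) :
    treeDisjointed A (δ + 1) (extFn f j) =
      treeDisjointed A δ f ⊓ (A (δ + 1) (extFn f j) \ ⨆ i < j, A (δ + 1) (extFn f i)) := by
  rw [treeDisjointed_add_one, resFn_extFn, extFn_last]

theorem treeDisjointed_of_isSuccLimit {β : Ordinal} (hβ : Order.IsSuccLimit β)
    (f : Iio β → Iio o) :
    treeDisjointed A β f = ⨅ α : Iio β, treeDisjointed A α (resFn α.2.le f) := by
  rw [treeDisjointed, limitRecOn_limit (h := hβ)]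
  rfl

theorem treeDisjointed_le_resFn {α β : Ordinal} (h : α ≤ β) (f : Iio β → Iio o) :
    treeDisjointed A β f ≤ treeDisjointed A α (resFn h f) := by
  induction β using limitRecOn generalizing α with
  | zero =>
    obtain rfl := nonpos_iff_eq_zero.mp h
    rfl
  | add_one δ ih =>
    rcases Order.le_succ_iff_eq_or_le.mp h with rfl | hα
    · rfl
    · rw [treeDisjointed_add_one]
      exact inf_le_left.trans (ih hα _)
  | limit δ hδ _ =>
    rcases h.lt_or_eq with hα | rfl
    · rw [treeDisjointed_of_isSuccLimit A hδ]
      exact iInf_le_of_le ⟨α, hα⟩ le_rfl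
    · rfl

theorem disjoint_treeDisjointed_extFn {δ : Ordinal} (f : Iio δ → Iio o) {i j : Iio o}
    (h : i < j) :
    Disjoint (treeDisjointed A (δ + 1) (extFn f i)) (treeDisjointed A (δ + 1) (extFn f j)) := by
  have hi : A (δ + 1) (extFn f i) ≤ ⨆ i' < j, A (δ + 1) (extFn f i') :=
    le_iSup₂_of_le i h le_rfl
  rw [treeDisjointed_extFn, treeDisjointed_extFn]
  exact (disjoint_sdiff_self_right.mono_left hi).mono (inf_le_right.trans sdiff_le) inf_le_right

theorem disjoint_treeDisjointed {β : Ordinal} {f f' : Iio β → Iio o} (hne : f ≠ f') :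
    Disjoint (treeDisjointed A β f) (treeDisjointed A β f') := by
  induction β using limitRecOn with
  | zero => exact absurd ((eq_emptyFn f).trans (eq_emptyFn f').symm) hne
  | add_one δ ih =>
    obtain ⟨g, j, rfl⟩ : ∃ g j, f = extFn g j := ⟨_, _, (extFn_resFn f).symm⟩
    obtain ⟨g', j', rfl⟩ : ∃ g j, f' = extFn g j := ⟨_, _, (extFn_resFn f').symm⟩
    by_cases hg : g = g'
    · subst hg
      rcases lt_or_gt_of_ne (fun h : j = j' => hne (h ▸ rfl)) with hj | hj
      · exact disjoint_treeDisjointed_extFn A g hj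
      · exact (disjoint_treeDisjointed_extFn A g hj).symm
    · rw [treeDisjointed_extFn, treeDisjointed_extFn]
      exact (ih hg).mono inf_le_left inf_le_left
  | limit δ hδ ih =>
    obtain ⟨x, hx⟩ := Function.ne_iff.mp hne
    have hx1 : x.1 + 1 < δ := hδ.add_one_lt x.2
    have hres : resFn hx1.le f ≠ resFn hx1.le f' := fun h =>
      hx (congrFun h ⟨x.1, Order.lt_succ x.1⟩)
    exact (ih _ hx1 hres).mono (treeDisjointed_le_resFn A _ f) (treeDisjointed_le_resFn A _ f')

theorem disjoint_treeDisjointed_of_ne_apply {α β x : Ordinal} (hα : x < α) (hβ : x < β)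
    {f : Iio α → Iio o} {g : Iio β → Iio o} (hne : f ⟨x, hα⟩ ≠ g ⟨x, hβ⟩) :
    Disjoint (treeDisjointed A α f) (treeDisjointed A β g) :=
  (disjoint_treeDisjointed A fun h => hne (congrFun h ⟨x, Order.lt_succ x⟩)).mono
    (treeDisjointed_le_resFn A (Order.add_one_le_of_lt hα) f)
    (treeDisjointed_le_resFn A (Order.add_one_le_of_lt hβ) g)

theorem treeDisjointed_le
    (hlim : ∀ β < o, Order.IsSuccLimit β → ∀ f, ⨅ α : Iio β, A α (resFn α.2.le f) ≤ A β f)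
    {β : Ordinal} (hβ : β < o) (f : Iio β → Iio o) : treeDisjointed A β f ≤ A β f := by
  induction β using limitRecOn with
  | zero => rw [treeDisjointed_zero, eq_emptyFn f]
  | add_one δ _ =>
    rw [treeDisjointed_add_one]
    exact inf_le_right.trans sdiff_le
  | limit δ hδ ih =>
    rw [treeDisjointed_of_isSuccLimit A hδ]
    exact (iInf_mono fun α : Iio δ => ih α.1 α.2 (α.2.trans hβ) _).trans (hlim δ hβ hδ f)

theorem treeDisjointed_le_iSup_extFn
    (hlim : ∀ β < o, Order.IsSuccLimit β → ∀ f, ⨅ α : Iio β, A α (resFn α.2.le f) ≤ A β f)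
    (hsucc : ∀ β, β + 1 < o → ∀ f, A β f ≤ ⨆ j, A (β + 1) (extFn f j))
    {β : Ordinal} (hβ : β + 1 < o) (f : Iio β → Iio o) :
    treeDisjointed A β f ≤ ⨆ j, treeDisjointed A (β + 1) (extFn f j) := by
  have hcover : treeDisjointed A β f ≤ ⨆ j, A (β + 1) (extFn f j) :=
    (treeDisjointed_le A hlim ((Order.lt_succ β).trans hβ) f).trans (hsucc β hβ f)
  calc treeDisjointed A β f
      ≤ treeDisjointed A β f ⊓
          ⨆ j, (A (β + 1) (extFn f j) \ ⨆ i < j, A (β + 1) (extFn f i)) :=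
        le_inf le_rfl (hcover.trans (iSup_le_iSup_sdiff_iSup_lt _))
    _ = ⨆ j, treeDisjointed A (β + 1) (extFn f j) := by
        simp only [inf_iSup_eq, treeDisjointed_extFn]

theorem iInf_treeDisjointed_le_iSup_iInf {ν : Ordinal} (H : Iio ν → Iio ν → Iio o) :
    ⨅ α : Iio ν, treeDisjointed A α (resFn α.2.le (H α)) ≤
      ⨆ F : Iio ν → Iio o, ⨅ α : Iio ν, treeDisjointed A α (resFn α.2.le F) := by
  classical
  -- `F x` is the value at `x` of the `H α` with `α > x`: if they all agree with `F`, they are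
  -- restrictions of `F`; otherwise two of them disagree and meet in `⊥`.
  let F : Iio ν → Iio o := fun x => if hx : x.1 + 1 < ν then H ⟨x.1 + 1, hx⟩ x else H x x
  by_cases hcoh : ∀ α x : Iio ν, x < α → H α x = F x
  · refine le_iSup_of_le F (iInf_mono fun α => le_of_eq ?_)
    congr 1
    exact funext fun x => hcoh α ⟨x, mem_Iio.mpr (x.2.trans α.2)⟩ x.2
  · push Not at hcoh
    obtain ⟨α, x, hxα, hne⟩ := hcoh
    have hx1 : x.1 + 1 < ν := (Order.add_one_le_of_lt (show x.1 < α.1 from hxα)).trans_lt α.2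
    have hdisj := disjoint_treeDisjointed_of_ne_apply A hxα (Order.lt_succ x.1)
      (f := resFn α.2.le (H α)) (g := resFn hx1.le (H ⟨x.1 + 1, hx1⟩))
      (by simpa [F, resFn, hx1] using hne)
    exact ((le_inf (iInf_le _ α) (iInf_le _ (⟨_, hx1⟩ : Iio ν))).trans hdisj.le_bot).trans bot_le

theorem iInf_iSup_treeDisjointed_le {ν : Ordinal} (hν : ν ≤ o)
    (hdist : IInfISupDistrib B (Iio ν) (Iio ν → Iio o)) :
    ⨅ α : Iio ν, ⨆ f : Iio α.1 → Iio o, treeDisjointed A α f ≤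
      ⨆ F : Iio ν → Iio o, ⨅ α : Iio ν, treeDisjointed A α (resFn α.2.le F) :=
  calc ⨅ α : Iio ν, ⨆ f : Iio α.1 → Iio o, treeDisjointed A α f
      = ⨅ α : Iio ν, ⨆ F : Iio ν → Iio o, treeDisjointed A α (resFn α.2.le F) :=
        iInf_congr fun α =>
          have : Nonempty (Iio o) := ⟨⟨α, α.2.trans_le hν⟩⟩
          ((resFn_surjective α.2.le).iSup_comp _).symm
    _ ≤ ⨆ H : Iio ν → Iio ν → Iio o, ⨅ α : Iio ν, treeDisjointed A α (resFn α.2.le (H α)) :=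
        hdist _
    _ ≤ _ := iSup_le (iInf_treeDisjointed_le_iSup_iInf A)

theorem le_iSup_treeDisjointed
    (hlim : ∀ β < o, Order.IsSuccLimit β → ∀ f, ⨅ α : Iio β, A α (resFn α.2.le f) ≤ A β f)
    (hsucc : ∀ β, β + 1 < o → ∀ f, A β f ≤ ⨆ j, A (β + 1) (extFn f j))
    (hdist : ∀ ν ≤ o, IInfISupDistrib B (Iio ν) (Iio ν → Iio o)) {β : Ordinal} (hβ : β < o) :
    A 0 (emptyFn o) ≤ ⨆ f : Iio β → Iio o, treeDisjointed A β f := by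
  induction β using limitRecOn with
  | zero => exact le_iSup_of_le (emptyFn o) (treeDisjointed_zero A _).ge
  | add_one δ ih =>
    refine (ih ((Order.lt_succ δ).trans hβ)).trans (iSup_le fun f => ?_)
    exact (treeDisjointed_le_iSup_extFn A hlim hsucc hβ f).trans
      (iSup_le fun j => le_iSup_of_le (extFn f j) le_rfl)
  | limit δ hδ ih =>
    calc A 0 (emptyFn o)
        ≤ ⨅ α : Iio δ, ⨆ f : Iio α.1 → Iio o, treeDisjointed A α f :=
          le_iInf fun α => ih α α.2 (α.2.trans hβ)
      _ ≤ ⨆ F : Iio δ → Iio o, ⨅ α : Iio δ, treeDisjointed A α (resFn α.2.le F) :=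
          iInf_iSup_treeDisjointed_le A hβ.le (hdist δ hβ.le)
      _ = ⨆ F, treeDisjointed A δ F := by
          simp only [treeDisjointed_of_isSuccLimit A hδ]

theorem le_iSup_iInf_of_iInfISupDistrib
    (hlim : ∀ β < o, Order.IsSuccLimit β → ∀ f, ⨅ α : Iio β, A α (resFn α.2.le f) ≤ A β f)
    (hsucc : ∀ β, β + 1 < o → ∀ f, A β f ≤ ⨆ j, A (β + 1) (extFn f j))
    (hdist : ∀ ν ≤ o, IInfISupDistrib B (Iio ν) (Iio ν → Iio o)) :
    A 0 (emptyFn o) ≤ ⨆ F : Iio o → Iio o, ⨅ β : Iio o, A β (resFn β.2.le F) :=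
  calc A 0 (emptyFn o)
      ≤ ⨅ β : Iio o, ⨆ f : Iio β.1 → Iio o, treeDisjointed A β f :=
        le_iInf fun β => le_iSup_treeDisjointed A hlim hsucc hdist β.2
    _ ≤ ⨆ F : Iio o → Iio o, ⨅ β : Iio o, treeDisjointed A β (resFn β.2.le F) :=
        iInf_iSup_treeDisjointed_le A le_rfl (hdist o le_rfl)
    _ ≤ _ := iSup_mono fun _ => iInf_mono fun β => treeDisjointed_le A hlim β.2 _

end Ordinal

open Ordinal in
theorem transfiniteDistrib_of_iInfISupDistrib {B : Type*} [CompleteBooleanAlgebra B]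
    {o : Ordinal} (hdist : ∀ ν ≤ o, IInfISupDistrib B (Iio ν) (Iio ν → Iio o)) :
    TransfiniteDistrib B o := by
  intro h0 a hsucc hlim
  classical
  let A : ∀ β : Ordinal, (Iio β → Iio o) → B := fun β f => if h : β < o then a ⟨β, h⟩ f else ⊥
  have hA : ∀ β (h : β < o) f, A β f = a ⟨β, h⟩ f := fun β h f => dif_pos h
  have hlim' : ∀ β < o, Order.IsSuccLimit β → ∀ f,
      ⨅ α : Iio β, A α (resFn α.2.le f) ≤ A β f := by
    intro β hβ hl f
    rw [hA β hβ, hlim ⟨β, hβ⟩ hl f]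
    exact iInf_mono fun α => (hA α (α.2.trans hβ) _).le
  have hsucc' : ∀ β, β + 1 < o → ∀ f, A β f ≤ ⨆ j, A (β + 1) (extFn f j) := by
    intro β hβ f
    rw [hA β ((Order.lt_succ β).trans hβ)]
    refine (hsucc β hβ f).trans (iSup_le ?_)
    rintro ⟨g, rfl⟩
    refine le_iSup_of_le (g ⟨β, Order.lt_succ β⟩) ?_
    rw [hA _ hβ, extFn_resFn]
  calc a ⟨0, _⟩ (emptyFn o) = A 0 (emptyFn o) := (hA 0 h0 _).symm
    _ ≤ ⨆ F : Iio o → Iio o, ⨅ β : Iio o, A β (resFn β.2.le F) :=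
      le_iSup_iInf_of_iInfISupDistrib A hlim' hsucc' hdist
    _ = _ := iSup_congr fun F => iInf_congr fun β => hA β.1 β.2 _

open Ordinal in
theorem iInfISupDistrib_Iio_of_isStrongLimit {κ : Cardinal.{u}} (hκ : κ.IsStrongLimit)
    {B : Type*} [CompleteLattice B]
    (hdist : ∀ I J : Type u, #I < κ → #J < κ → IInfISupDistrib B I J)
    {γ : Cardinal.{u}} (hγ : γ < κ) {ν : Ordinal.{u}} (hν : ν ≤ γ.ord) :
    IInfISupDistrib B (Iio ν) (Iio ν → Iio γ.ord) := by
  have hνκ : ν.card < κ := ((card_le_card hν).trans_eq (card_ord γ)).trans_lt hγ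
  have hI : #ν.ToType < κ := by rwa [mk_toType]
  have hJ : #(ν.ToType → γ.ord.ToType) < κ := by
    rw [← power_def, mk_toType, mk_toType, card_ord]
    exact hκ.power_lt hγ hνκ
  exact (hdist _ _ hI hJ).congr ToType.mk.symm.toEquiv
    (ToType.mk.symm.toEquiv.arrowCongr ToType.mk.symm.toEquiv)

/-- If `κ` is inaccessible and `B` is a complete Boolean algebra satisfying the classical
distributivity law for all index sets of cardinality less than `κ`, then `B` satisfies the
transfinite distributivity law at every cardinal `γ < κ`. -/
theorem completeBooleanAlgebra_classical_distrib_implies_transfiniteDistrib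
    (κ : Cardinal.{u}) (hκ : κ.IsInaccessible)
    (B : Type u) [CompleteBooleanAlgebra B]
    (hdist : ∀ (I J : Type u), Cardinal.mk I < κ → Cardinal.mk J < κ →
      ∀ ψ : I × J → B, ⨅ i : I, ⨆ j : J, ψ (i, j) ≤ ⨆ f : I → J, ⨅ i : I, ψ (i, f i))
    (γ : Cardinal.{u}) (hγ : γ < κ) :
    TransfiniteDistrib B γ.ord :=
  transfiniteDistrib_of_iInfISupDistrib fun _ hν => iInfISupDistrib_Iio_of_isStrongLimit
    hκ.isStrongLimit (fun I J hI hJ c => hdist I J hI hJ (Function.uncurry c)) hγ hν
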